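/- Let μ be a stationary probability on A^I and ν₁, ν₂ channels to B^I and C^I that are stationary with respect to μ. The product channel ν₁ × ν₂ is output weakly mixing with respect to μ if and only if ν₁ and ν₂ are both output weakly mixing with respect to μ. -/

import Mathlib

/-!
Restricting to cylinders `G ×ˢ univ` and `univ ×ˢ H` turns the mixing defect of the product
channel into that of one factor. Conversely, the independence defect of a product of rectangles is
at most the sum of the defects of the factors, so the product channel mixes on the π-system of
rectangles, and a Dynkin argument in each of the two sets extends this to all measurable sets.
Complements cost nothing; for a disjoint union `⋃ k, f k` the defect is bounded by that of finitely
many pieces plus the mass of the tail `⋃ k ≥ N, f k`. When the union is the shifted set, this mass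
is read along the orbit: by stationarity it is a Birkhoff sum of `x ↦ κ x (⋃ k ≥ N, f k)`, whose
integral tends to `0`, and the maximal ergodic inequality makes its averages small uniformly in
time for almost every `x`.
-/

open MeasureTheory ProbabilityTheory Filter
open scoped ProbabilityTheory

/-- The one-sided shift on a sequence space. -/
def seqShift {A : Type*} : (ℕ → A) → (ℕ → A) := fun x i => x (i + 1)

/-- A channel `ν` is output weakly mixing w.r.t. `μ` if for all measurable output sets
`G, G'` the Cesàro averages of `|ν(x, T^{-i}G ∩ G') - ν(x, T^{-i}G)·ν(x, G')|` tend to 0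
for μ-a.e. `x`. -/
def OutputWeaklyMixing {X Y : Type*} [MeasurableSpace X] [MeasurableSpace Y]
    (ν : ProbabilityTheory.Kernel X Y) (μ : Measure X) (T : Y → Y) : Prop :=
  ∀ G G' : Set Y, MeasurableSet G → MeasurableSet G' →
    ∀ᵐ x ∂μ, Tendsto
      (fun n : ℕ => (∑ i ∈ Finset.range n,
        |((ν x) ((T^[i]) ⁻¹' G ∩ G')).toReal -
          ((ν x) ((T^[i]) ⁻¹' G)).toReal * ((ν x) G').toReal|) / (n : ℝ))
      atTop (nhds 0)

open scoped Topology

def CesaroNull (u : ℕ → ℝ) : Prop :=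
  Tendsto (fun n : ℕ => (∑ i ∈ Finset.range n, u i) / n) atTop (𝓝 0)

@[simp]
theorem cesaroNull_zero : CesaroNull fun _ => 0 := by
  simp [CesaroNull]

theorem CesaroNull.add {u v : ℕ → ℝ} (hu : CesaroNull u) (hv : CesaroNull v) :
    CesaroNull (u + v) := by
  simpa [CesaroNull, Finset.sum_add_distrib, add_div] using Tendsto.add hu hv

theorem CesaroNull.of_le {u v : ℕ → ℝ} (hv : CesaroNull v) (hu : ∀ i, 0 ≤ u i)
    (huv : ∀ i, u i ≤ v i) : CesaroNull u :=
  squeeze_zero (fun n => div_nonneg (Finset.sum_nonneg fun i _ => hu i) n.cast_nonneg)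
    (fun n => div_le_div_of_nonneg_right (Finset.sum_le_sum fun i _ => huv i) n.cast_nonneg) hv

theorem CesaroNull.of_le_sum_add {u : ℕ → ℝ} {v r : ℕ → ℕ → ℝ} (hu : ∀ i, 0 ≤ u i)
    (huv : ∀ N i, u i ≤ ∑ k ∈ Finset.range N, v k i + r N i) (hv : ∀ k, CesaroNull (v k))
    (hr : ∀ ε > 0, ∃ N, ∀ n, ∑ i ∈ Finset.range n, r N i ≤ ε * n) : CesaroNull u := by
  refine tendsto_order.2 ⟨fun a ha => Eventually.of_forall fun n =>
    ha.trans_le (div_nonneg (Finset.sum_nonneg fun i _ => hu i) n.cast_nonneg), fun ε hε => ?_⟩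
  obtain ⟨N, hN⟩ := hr (ε / 2) (half_pos hε)
  have hmain : Tendsto (fun n : ℕ => ∑ k ∈ Finset.range N, (∑ i ∈ Finset.range n, v k i) / n)
      atTop (𝓝 0) := by
    simpa using tendsto_finsetSum (Finset.range N) fun k _ => hv k
  filter_upwards [hmain.eventually_lt_const (half_pos hε)] with n hn
  have hrem : (∑ i ∈ Finset.range n, r N i) / n ≤ ε / 2 :=
    div_le_of_le_mul₀ n.cast_nonneg (half_pos hε).le (hN n)
  calc (∑ i ∈ Finset.range n, u i) / n
      ≤ (∑ i ∈ Finset.range n, (∑ k ∈ Finset.range N, v k i + r N i)) / n :=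
        div_le_div_of_nonneg_right (Finset.sum_le_sum fun i _ => huv N i) n.cast_nonneg
    _ = ∑ k ∈ Finset.range N, (∑ i ∈ Finset.range n, v k i) / n
          + (∑ i ∈ Finset.range n, r N i) / n := by
        rw [Finset.sum_add_distrib, Finset.sum_comm, add_div, Finset.sum_div]
    _ < ε := by linarith

section MaximalErgodic

variable {X : Type*} {S : X → X} {φ : X → ℝ}

/-- `maxBirkhoffSum S φ n x = ⨆ k ≤ n, birkhoffSum S φ k x` (the `k = 0` term is `0`). -/
noncomputable def maxBirkhoffSum (S : X → X) (φ : X → ℝ) : ℕ → X → ℝ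
  | 0 => 0
  | n + 1 => fun x => max 0 (φ x + maxBirkhoffSum S φ n (S x))

theorem maxBirkhoffSum_nonneg (n : ℕ) (x : X) : 0 ≤ maxBirkhoffSum S φ n x := by
  cases n
  · exact le_rfl
  · exact le_max_left _ _

theorem maxBirkhoffSum_le_succ (n : ℕ) (x : X) :
    maxBirkhoffSum S φ n x ≤ maxBirkhoffSum S φ (n + 1) x := by
  induction n generalizing x with
  | zero => exact maxBirkhoffSum_nonneg 1 x
  | succ n ih => exact max_le_max le_rfl (add_le_add le_rfl (ih (S x)))

theorem birkhoffSum_le_maxBirkhoffSum {k n : ℕ} (hkn : k ≤ n) (x : X) :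
    birkhoffSum S φ k x ≤ maxBirkhoffSum S φ n x := by
  induction n generalizing k x with
  | zero => simp [Nat.le_zero.1 hkn, birkhoffSum_zero, maxBirkhoffSum]
  | succ n ih =>
    cases k with
    | zero => exact (birkhoffSum_zero S φ x).trans_le (maxBirkhoffSum_nonneg _ x)
    | succ k =>
      rw [birkhoffSum_succ']
      exact (add_le_add le_rfl (ih (by omega) (S x))).trans (le_max_right _ _)

theorem exists_birkhoffSum_eq_maxBirkhoffSum (n : ℕ) (x : X) :
    ∃ k ≤ n, birkhoffSum S φ k x = maxBirkhoffSum S φ n x := by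
  induction n generalizing x with
  | zero => exact ⟨0, le_rfl, rfl⟩
  | succ n ih =>
    obtain ⟨k, hkn, hk⟩ := ih (S x)
    rcases max_cases 0 (φ x + maxBirkhoffSum S φ n (S x)) with ⟨h, -⟩ | ⟨h, -⟩
    · exact ⟨0, n.zero_le.trans n.le_succ, h.symm⟩
    · exact ⟨k + 1, by omega, by rw [birkhoffSum_succ', hk]; exact h.symm⟩

theorem maxBirkhoffSum_le_birkhoffSum_abs (n : ℕ) (x : X) :
    maxBirkhoffSum S φ n x ≤ birkhoffSum S (fun y => |φ y|) n x := by
  induction n generalizing x with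
  | zero => simp [maxBirkhoffSum, birkhoffSum_zero]
  | succ n ih =>
    rw [birkhoffSum_succ']
    exact max_le (add_nonneg (abs_nonneg _) (Finset.sum_nonneg fun _ _ => abs_nonneg _))
      (add_le_add (le_abs_self _) (ih (S x)))

theorem sub_maxBirkhoffSum_comp_le {n : ℕ} {x : X} (hx : 0 < maxBirkhoffSum S φ (n + 1) x) :
    maxBirkhoffSum S φ (n + 1) x - maxBirkhoffSum S φ (n + 1) (S x) ≤ φ x := by
  have hpos : 0 < φ x + maxBirkhoffSum S φ n (S x) :=
    (lt_max_iff.1 hx).resolve_left (lt_irrefl 0)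
  have hrec : maxBirkhoffSum S φ (n + 1) x = φ x + maxBirkhoffSum S φ n (S x) :=
    max_eq_right hpos.le
  linarith [maxBirkhoffSum_le_succ (S := S) (φ := φ) n (S x)]

variable [MeasurableSpace X] {μ : Measure X}

theorem measurable_maxBirkhoffSum (hS : Measurable S) (hφ : Measurable φ) (n : ℕ) :
    Measurable (maxBirkhoffSum S φ n) := by
  induction n with
  | zero => exact measurable_const
  | succ n ih => exact measurable_const.max (hφ.add (ih.comp hS))

theorem integrable_maxBirkhoffSum (hS : MeasurePreserving S μ μ)
    (hφm : Measurable φ) (hφ : Integrable φ μ) (n : ℕ) :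
    Integrable (maxBirkhoffSum S φ n) μ := by
  refine Integrable.mono' (g := birkhoffSum S (fun y => |φ y|) n)
    (integrable_finsetSum _ fun k _ => (hS.iterate k).integrable_comp_of_integrable hφ.abs)
    (measurable_maxBirkhoffSum hS.measurable hφm n).aestronglyMeasurable
    (Eventually.of_forall fun x => ?_)
  rw [Real.norm_of_nonneg (maxBirkhoffSum_nonneg n x)]
  exact maxBirkhoffSum_le_birkhoffSum_abs n x

theorem setIntegral_maxBirkhoffSum_pos_nonneg (hS : MeasurePreserving S μ μ)
    (hφm : Measurable φ) (hφ : Integrable φ μ) (n : ℕ) :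
    0 ≤ ∫ x in {x | 0 < maxBirkhoffSum S φ n x}, φ x ∂μ := by
  cases n with
  | zero => simp [maxBirkhoffSum]
  | succ n =>
    set Φ := maxBirkhoffSum S φ (n + 1)
    have hΦ : Integrable Φ μ := integrable_maxBirkhoffSum hS hφm hφ (n + 1)
    have hΦS : Integrable (fun x => Φ (S x)) μ := hS.integrable_comp_of_integrable hΦ
    have hE : MeasurableSet {x | 0 < Φ x} :=
      measurableSet_lt measurable_const (measurable_maxBirkhoffSum hS.measurable hφm _)
    have hoff : ∫ x in {x | 0 < Φ x}, Φ x ∂μ = ∫ x, Φ x ∂μ :=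
      setIntegral_eq_integral_of_forall_compl_eq_zero fun x hx =>
        le_antisymm (not_lt.1 hx) (maxBirkhoffSum_nonneg _ x)
    have hinv : ∫ x, Φ (S x) ∂μ = ∫ x, Φ x ∂μ := by
      have h := integral_map (μ := μ) hS.measurable.aemeasurable (f := Φ)
        (by rw [hS.map_eq]; exact hΦ.aestronglyMeasurable)
      rwa [hS.map_eq, eq_comm] at h
    calc 0 = ∫ x, Φ x ∂μ - ∫ x, Φ (S x) ∂μ := by rw [hinv, sub_self]
      _ ≤ ∫ x in {x | 0 < Φ x}, Φ x ∂μ - ∫ x in {x | 0 < Φ x}, Φ (S x) ∂μ := by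
          rw [hoff]
          exact sub_le_sub_left (setIntegral_le_integral hΦS
            (Eventually.of_forall fun x => maxBirkhoffSum_nonneg _ _)) _
      _ = ∫ x in {x | 0 < Φ x}, (Φ x - Φ (S x)) ∂μ :=
          (integral_sub hΦ.integrableOn hΦS.integrableOn).symm
      _ ≤ ∫ x in {x | 0 < Φ x}, φ x ∂μ :=
          setIntegral_mono_on (hΦ.sub hΦS).integrableOn hφ.integrableOn hE
            fun x hx => sub_maxBirkhoffSum_comp_le hx

/-- Garsia's maximal ergodic lemma. -/
theorem setIntegral_exists_birkhoffSum_pos_nonneg (hS : MeasurePreserving S μ μ)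
    (hφm : Measurable φ) (hφ : Integrable φ μ) :
    0 ≤ ∫ x in {x | ∃ n, 0 < birkhoffSum S φ n x}, φ x ∂μ := by
  have hunion : {x | ∃ n, 0 < birkhoffSum S φ n x} = ⋃ n, {x | 0 < maxBirkhoffSum S φ n x} := by
    ext x
    simp only [Set.mem_ofPred_eq, Set.mem_iUnion]
    constructor
    · rintro ⟨n, hn⟩
      exact ⟨n, hn.trans_le (birkhoffSum_le_maxBirkhoffSum le_rfl x)⟩
    · rintro ⟨n, hn⟩
      obtain ⟨k, -, hk⟩ := exists_birkhoffSum_eq_maxBirkhoffSum n x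
      exact ⟨k, hk ▸ hn⟩
  rw [hunion]
  refine ge_of_tendsto' (tendsto_setIntegral_of_monotone (fun n => ?_) ?_ hφ.integrableOn)
    (setIntegral_maxBirkhoffSum_pos_nonneg hS hφm hφ)
  · exact measurableSet_lt measurable_const (measurable_maxBirkhoffSum hS.measurable hφm n)
  · exact monotone_nat_of_le_succ fun n x hx => hx.trans_le (maxBirkhoffSum_le_succ n x)

theorem maximal_ergodic_inequality [IsFiniteMeasure μ] (hS : MeasurePreserving S μ μ)
    {f : X → ℝ} (hfm : Measurable f) (hf : Integrable f μ) (hf0 : 0 ≤ f) (ε : ℝ) :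
    ε * μ.real {x | ∃ n : ℕ, ε * n < birkhoffSum S f n x} ≤ ∫ x, f x ∂μ := by
  have hset : {x | ∃ n : ℕ, ε * n < birkhoffSum S f n x}
      = {x | ∃ n, 0 < birkhoffSum S (fun y => f y - ε) n x} := by
    ext x
    simp [birkhoffSum, Finset.sum_sub_distrib, mul_comm ε]
  have h := setIntegral_exists_birkhoffSum_pos_nonneg (φ := fun y => f y - ε) hS
    (hfm.sub measurable_const) (hf.sub (integrable_const ε))
  rw [← hset, integral_sub hf.integrableOn (integrable_const ε).integrableOn, setIntegral_const,
    smul_eq_mul] at h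
  have := setIntegral_le_integral (s := {x | ∃ n : ℕ, ε * n < birkhoffSum S f n x}) hf
    (Eventually.of_forall hf0)
  linarith

theorem ae_forall_exists_birkhoffSum_le [IsFiniteMeasure μ] (hS : MeasurePreserving S μ μ)
    {g : ℕ → X → ℝ} (hgm : ∀ N, Measurable (g N)) (hg : ∀ N, Integrable (g N) μ)
    (hg0 : ∀ N, 0 ≤ g N) (hlim : Tendsto (fun N => ∫ x, g N x ∂μ) atTop (𝓝 0)) :
    ∀ᵐ x ∂μ, ∀ ε > 0, ∃ N, ∀ n : ℕ, birkhoffSum S (g N) n x ≤ ε * n := by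
  have hk : ∀ k : ℕ, ∀ᵐ x ∂μ, ∃ N, ∀ n : ℕ, birkhoffSum S (g N) n x ≤ (k + 1 : ℝ)⁻¹ * n := by
    intro k
    set ε : ℝ := (k + 1 : ℝ)⁻¹
    have hε : 0 < ε := by positivity
    set bad := ⋂ N, {x | ∃ n : ℕ, ε * n < birkhoffSum S (g N) n x}
    have hbad : ∀ N, μ.real bad ≤ ε⁻¹ * ∫ x, g N x ∂μ := fun N =>
      (measureReal_mono (Set.iInter_subset _ N)).trans
        ((le_inv_mul_iff₀ hε).2 (maximal_ergodic_inequality hS (hgm N) (hg N) (hg0 N) ε))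
    have hzero : μ.real bad = 0 :=
      le_antisymm (ge_of_tendsto' (by simpa using hlim.const_mul ε⁻¹) hbad) measureReal_nonneg
    filter_upwards [measure_eq_zero_iff_ae_notMem.1 ((measureReal_eq_zero_iff).1 hzero)]
      with x hx
    simpa [bad] using hx
  filter_upwards [ae_all_iff.2 hk] with x hx ε hε
  obtain ⟨k, hk⟩ := exists_nat_one_div_lt hε
  obtain ⟨N, hN⟩ := hx k
  exact ⟨N, fun n => (hN n).trans
    (mul_le_mul_of_nonneg_right (by simpa using hk.le) n.cast_nonneg)⟩

end MaximalErgodic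

section IndepDefect

open Function

variable {Y Z : Type*} [MeasurableSpace Y] [MeasurableSpace Z] {m : Measure Y} {A B : Set Y}
  {A' B' : Set Z}

noncomputable def indepDefect (m : Measure Y) (A B : Set Y) : ℝ :=
  |m.real (A ∩ B) - m.real A * m.real B|

theorem indepDefect_nonneg : 0 ≤ indepDefect m A B := abs_nonneg _

theorem indepDefect_comm : indepDefect m A B = indepDefect m B A := by
  rw [indepDefect, indepDefect, Set.inter_comm, mul_comm]

@[simp]
theorem indepDefect_empty_left : indepDefect m ∅ B = 0 := by
  simp [indepDefect]

@[simp]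
theorem indepDefect_empty_right : indepDefect m A ∅ = 0 := by
  simp [indepDefect]

theorem indepDefect_compl_left [IsProbabilityMeasure m] (hA : MeasurableSet A) :
    indepDefect m Aᶜ B = indepDefect m A B := by
  have hsplit : m.real (B ∩ A) + m.real (Aᶜ ∩ B) = m.real B := by
    rw [Set.inter_comm Aᶜ, ← Set.sdiff_eq]
    exact measureReal_inter_add_sdiff hA
  rw [indepDefect, indepDefect, measureReal_compl hA, probReal_univ,
    Set.inter_comm A, ← abs_neg]
  congr 1
  linarith

theorem indepDefect_le_measureReal_left [IsProbabilityMeasure m] :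
    indepDefect m A B ≤ m.real A := by
  have hAB : m.real (A ∩ B) ≤ m.real A := measureReal_mono Set.inter_subset_left
  have hprod : m.real A * m.real B ≤ m.real A :=
    mul_le_of_le_one_right measureReal_nonneg measureReal_le_one
  have hprod0 : 0 ≤ m.real A * m.real B := mul_nonneg measureReal_nonneg measureReal_nonneg
  rw [indepDefect, abs_sub_le_iff]
  constructor <;> linarith [measureReal_nonneg (μ := m) (s := A ∩ B)]

theorem indepDefect_iUnion_le [IsProbabilityMeasure m] {F : ℕ → Set Y}
    (hF : ∀ k, MeasurableSet (F k)) (hFd : Pairwise (Disjoint on F)) (hB : MeasurableSet B)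
    (N : ℕ) :
    indepDefect m (⋃ k, F k) B
      ≤ ∑ k ∈ Finset.range N, indepDefect m (F k) B + m.real (⋃ k ≥ N, F k) := by
  set d : Set Y → ℝ := fun A => m.real (A ∩ B) - m.real A * m.real B
  have hsplit : (⋃ k, F k) = (⋃ k ∈ Finset.range N, F k) ∪ ⋃ k ≥ N, F k := by
    ext y
    simp only [Set.mem_iUnion, Set.mem_union, Finset.mem_range]
    exact ⟨fun ⟨k, hk⟩ => (lt_or_ge k N).imp (fun h => ⟨k, h, hk⟩) (fun h => ⟨k, h, hk⟩),
      fun h => h.elim (fun ⟨k, _, hk⟩ => ⟨k, hk⟩) (fun ⟨k, _, hk⟩ => ⟨k, hk⟩)⟩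
  have hdisj : Disjoint (⋃ k ∈ Finset.range N, F k) (⋃ k ≥ N, F k) := by
    simp only [Set.disjoint_iUnion_left, Set.disjoint_iUnion_right, Finset.mem_range]
    exact fun k hk j hj => hFd (by omega)
  have htail : MeasurableSet (⋃ k ≥ N, F k) := .biUnion (Set.to_countable _) fun k _ => hF k
  have hpair : (↑(Finset.range N) : Set ℕ).PairwiseDisjoint F := fun i _ j _ hij => hFd hij
  have hfin : d (⋃ k ∈ Finset.range N, F k) = ∑ k ∈ Finset.range N, d (F k) := by
    simp only [d, Set.iUnion₂_inter, Finset.sum_sub_distrib, ← Finset.sum_mul]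
    rw [measureReal_biUnion_finset hpair fun k _ => hF k,
      measureReal_biUnion_finset (hpair.mono fun k => Set.inter_subset_left)
        fun k _ => (hF k).inter hB]
  have hunion : d (⋃ k, F k) = d (⋃ k ∈ Finset.range N, F k) + d (⋃ k ≥ N, F k) := by
    simp only [d, hsplit, Set.union_inter_distrib_right]
    rw [measureReal_union hdisj htail (measure_ne_top m _) (measure_ne_top m _),
      measureReal_union (hdisj.mono Set.inter_subset_left Set.inter_subset_left) (htail.inter hB)
        (measure_ne_top m _) (measure_ne_top m _)]
    ring
  calc indepDefect m (⋃ k, F k) B = |d (⋃ k, F k)| := rfl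
    _ ≤ ∑ k ∈ Finset.range N, |d (F k)| + |d (⋃ k ≥ N, F k)| := by
        rw [hunion, hfin]
        exact (abs_add_le _ _).trans (add_le_add (Finset.abs_sum_le_sum_abs _ _) le_rfl)
    _ ≤ _ := add_le_add le_rfl indepDefect_le_measureReal_left

theorem indepDefect_prod_le (m₁ : Measure Y) (m₂ : Measure Z) [IsProbabilityMeasure m₁]
    [IsProbabilityMeasure m₂] :
    indepDefect (m₁.prod m₂) (A ×ˢ A') (B ×ˢ B') ≤ indepDefect m₁ A B + indepDefect m₂ A' B' := by
  simp only [indepDefect, Set.prod_inter_prod, measureReal_prod_prod]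
  set a := m₁.real (A ∩ B)
  set a' := m₂.real (A' ∩ B')
  set pq := m₁.real A * m₁.real B
  have ha' : a' ≤ 1 := measureReal_le_one
  have hpq : pq ≤ 1 := mul_le_one₀ measureReal_le_one measureReal_nonneg measureReal_le_one
  have hpq0 : 0 ≤ pq := mul_nonneg measureReal_nonneg measureReal_nonneg
  calc |a * a' - m₁.real A * m₂.real A' * (m₁.real B * m₂.real B')|
      = |(a - pq) * a' + pq * (a' - m₂.real A' * m₂.real B')| := by
        congr 1
        ring
    _ ≤ |a - pq| * a' + pq * |a' - m₂.real A' * m₂.real B'| := by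
        refine (abs_add_le _ _).trans_eq ?_
        rw [abs_mul, abs_mul, abs_of_nonneg measureReal_nonneg, abs_of_nonneg hpq0]
    _ ≤ |a - pq| + |a' - m₂.real A' * m₂.real B'| := by
        gcongr
        · exact mul_le_of_le_one_right (abs_nonneg _) ha'
        · exact mul_le_of_le_one_left (abs_nonneg _) hpq

theorem indepDefect_prod_univ (m₁ : Measure Y) (m₂ : Measure Z) [IsProbabilityMeasure m₂] :
    indepDefect (m₁.prod m₂) (A ×ˢ Set.univ) (B ×ˢ Set.univ) = indepDefect m₁ A B := by
  simp only [indepDefect, Set.prod_inter_prod, Set.univ_inter, measureReal_prod_prod,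
    probReal_univ, mul_one]

theorem indepDefect_univ_prod (m₁ : Measure Y) (m₂ : Measure Z) [IsProbabilityMeasure m₁]
    [SFinite m₂] :
    indepDefect (m₁.prod m₂) (Set.univ ×ˢ A') (Set.univ ×ˢ B') = indepDefect m₂ A' B' := by
  simp only [indepDefect, Set.prod_inter_prod, Set.univ_inter, measureReal_prod_prod,
    probReal_univ, one_mul]

end IndepDefect

section Stationary

variable {X Y Z : Type*} [MeasurableSpace X] [MeasurableSpace Y] [MeasurableSpace Z]
  {μ : Measure X} {S : X → X} {T : Y → Y} {κ : Kernel X Y}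

def IsStationaryChannel (κ : Kernel X Y) (μ : Measure X) (S : X → X) (T : Y → Y) : Prop :=
  ∀ W, MeasurableSet W → ∀ᵐ x ∂μ, κ x (T ⁻¹' W) = κ (S x) W

theorem IsStationaryChannel.of_isPiSystem [IsMarkovKernel κ] (hT : Measurable T)
    {𝒞 : Set (Set Y)} (hgen : ‹MeasurableSpace Y› = MeasurableSpace.generateFrom 𝒞)
    (hpi : IsPiSystem 𝒞) (h : ∀ W ∈ 𝒞, ∀ᵐ x ∂μ, κ x (T ⁻¹' W) = κ (S x) W) :
    IsStationaryChannel κ μ S T := by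
  refine MeasurableSpace.induction_on_inter hgen hpi (by simp) h ?_ ?_
  · intro W hW hstat
    filter_upwards [hstat] with x hx
    rw [Set.preimage_compl, prob_compl_eq_one_sub (hT hW), prob_compl_eq_one_sub hW, hx]
  · intro f hfd hf hstat
    filter_upwards [ae_all_iff.2 hstat] with x hx
    rw [Set.preimage_iUnion, measure_iUnion (fun i j hij => (hfd hij).preimage T)
      (fun i => hT (hf i)), measure_iUnion hfd hf]
    exact tsum_congr hx

theorem IsStationaryChannel.prod {T₁ : Y → Y} {T₂ : Z → Z} {κ₁ : Kernel X Y} {κ₂ : Kernel X Z}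
    [IsMarkovKernel κ₁] [IsMarkovKernel κ₂] (hT₁ : Measurable T₁) (hT₂ : Measurable T₂)
    (h₁ : IsStationaryChannel κ₁ μ S T₁) (h₂ : IsStationaryChannel κ₂ μ S T₂) :
    IsStationaryChannel (κ₁ ×ₖ κ₂) μ S (Prod.map T₁ T₂) := by
  refine .of_isPiSystem (hT₁.prodMap hT₂) generateFrom_prod.symm isPiSystem_prod ?_
  rintro _ ⟨A, hA, B, hB, rfl⟩
  filter_upwards [h₁ A hA, h₂ B hB] with x hx₁ hx₂
  rw [Set.preimage_prod_map_prod, Kernel.prod_apply_prod, Kernel.prod_apply_prod, hx₁, hx₂]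

theorem IsStationaryChannel.iterate (hS : Measure.QuasiMeasurePreserving S μ μ)
    (hT : Measurable T) (h : IsStationaryChannel κ μ S T) (i : ℕ) :
    IsStationaryChannel κ μ S^[i] T^[i] := by
  induction i with
  | zero => exact fun W _ => Eventually.of_forall fun x => rfl
  | succ i ih =>
    intro W hW
    filter_upwards [h _ (hT.iterate i hW), hS.ae (ih W hW)] with x hx hSx
    rw [Function.iterate_succ, Set.preimage_comp, hx, hSx, Function.iterate_succ_apply]

end Stationary

section Extension

open Function

variable {X Y : Type*} [MeasurableSpace X] [MeasurableSpace Y]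
  {μ : Measure X} {S : X → X} {T : Y → Y} {κ : Kernel X Y} {A B : Set Y}

theorem tendsto_measureReal_biUnion_Ici_zero_of_pairwise_disjoint {m : Measure Y}
    [IsFiniteMeasure m] {f : ℕ → Set Y} (hf : ∀ k, MeasurableSet (f k))
    (hfd : Pairwise (Disjoint on f)) :
    Tendsto (fun N => m.real (⋃ k ≥ N, f k)) atTop (𝓝 0) :=
  (ENNReal.tendsto_toReal ENNReal.zero_ne_top).comp
    (tendsto_measure_biUnion_Ici_zero_of_pairwise_disjoint (fun k => (hf k).nullMeasurableSet) hfd)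

theorem CesaroNull.indepDefect_iUnion {m : Measure Y} [IsProbabilityMeasure m]
    {F : ℕ → ℕ → Set Y} {B : ℕ → Set Y} (hF : ∀ i k, MeasurableSet (F i k))
    (hFd : ∀ i, Pairwise (Disjoint on F i)) (hB : ∀ i, MeasurableSet (B i))
    (h : ∀ k, CesaroNull fun i => indepDefect m (F i k) (B i))
    (htail : ∀ ε > 0, ∃ N, ∀ n, ∑ i ∈ Finset.range n, m.real (⋃ k ≥ N, F i k) ≤ ε * n) :
    CesaroNull fun i => indepDefect m (⋃ k, F i k) (B i) :=
  .of_le_sum_add (fun _ => indepDefect_nonneg)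
    (fun N i => indepDefect_iUnion_le (hF i) (hFd i) (hB i) N) h htail

def OutputWeaklyMixingOn (κ : Kernel X Y) (μ : Measure X) (T : Y → Y) (A B : Set Y) : Prop :=
  ∀ᵐ x ∂μ, CesaroNull fun i => indepDefect (κ x) (T^[i] ⁻¹' A) B

theorem outputWeaklyMixing_iff : OutputWeaklyMixing κ μ T ↔
    ∀ A B, MeasurableSet A → MeasurableSet B → OutputWeaklyMixingOn κ μ T A B :=
  Iff.rfl

theorem outputWeaklyMixingOn_empty_left : OutputWeaklyMixingOn κ μ T ∅ B := by
  simp [OutputWeaklyMixingOn]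

theorem outputWeaklyMixingOn_empty_right : OutputWeaklyMixingOn κ μ T A ∅ := by
  simp [OutputWeaklyMixingOn]

theorem OutputWeaklyMixingOn.compl_left [IsMarkovKernel κ] (hT : Measurable T)
    (hA : MeasurableSet A) (h : OutputWeaklyMixingOn κ μ T A B) :
    OutputWeaklyMixingOn κ μ T Aᶜ B := by
  filter_upwards [h] with x hx
  convert hx using 2 with i
  rw [Set.preimage_compl, indepDefect_compl_left (hT.iterate i hA)]

theorem OutputWeaklyMixingOn.compl_right [IsMarkovKernel κ] (hB : MeasurableSet B)
    (h : OutputWeaklyMixingOn κ μ T A B) : OutputWeaklyMixingOn κ μ T A Bᶜ := by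
  filter_upwards [h] with x hx
  convert hx using 2 with i
  rw [indepDefect_comm, indepDefect_compl_left hB, indepDefect_comm]

theorem OutputWeaklyMixingOn.iUnion_right [IsMarkovKernel κ] (hT : Measurable T)
    (hA : MeasurableSet A) {f : ℕ → Set Y} (hf : ∀ k, MeasurableSet (f k))
    (hfd : Pairwise (Disjoint on f)) (h : ∀ k, OutputWeaklyMixingOn κ μ T A (f k)) :
    OutputWeaklyMixingOn κ μ T A (⋃ k, f k) := by
  filter_upwards [ae_all_iff.2 h] with x hx
  have htail : ∀ ε > 0, ∃ N, ∀ n : ℕ,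
      ∑ _i ∈ Finset.range n, (κ x).real (⋃ k ≥ N, f k) ≤ ε * n := fun ε hε => by
    obtain ⟨N, hN⟩ := ((tendsto_measureReal_biUnion_Ici_zero_of_pairwise_disjoint (m := κ x)
      hf hfd).eventually (ge_mem_nhds hε)).exists
    exact ⟨N, fun n => by
      rw [Finset.sum_const, Finset.card_range, nsmul_eq_mul, mul_comm]
      exact mul_le_mul_of_nonneg_right hN n.cast_nonneg⟩
  have := CesaroNull.indepDefect_iUnion (F := fun _ => f) (B := fun i => T^[i] ⁻¹' A)
    (fun _ => hf) (fun _ => hfd) (fun i => hT.iterate i hA)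
    (fun k => by simpa only [indepDefect_comm] using hx k) htail
  simpa only [indepDefect_comm] using this

theorem OutputWeaklyMixingOn.iUnion_left [IsFiniteMeasure μ] [IsMarkovKernel κ]
    (hS : MeasurePreserving S μ μ) (hT : Measurable T) (hκ : IsStationaryChannel κ μ S T)
    (hB : MeasurableSet B) {f : ℕ → Set Y} (hf : ∀ k, MeasurableSet (f k))
    (hfd : Pairwise (Disjoint on f)) (h : ∀ k, OutputWeaklyMixingOn κ μ T (f k) B) :
    OutputWeaklyMixingOn κ μ T (⋃ k, f k) B := by
  have htail : ∀ N, MeasurableSet (⋃ k ≥ N, f k) :=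
    fun N => .biUnion (Set.to_countable _) fun k _ => hf k
  set g : ℕ → X → ℝ := fun N x => (κ x).real (⋃ k ≥ N, f k)
  have hgm : ∀ N, Measurable (g N) := fun N => (κ.measurable_coe (htail N)).ennreal_toReal
  have hg1 : ∀ N x, ‖g N x‖ ≤ 1 := fun N x => by
    rw [Real.norm_of_nonneg measureReal_nonneg]
    exact measureReal_le_one
  have hlim : Tendsto (fun N => ∫ x, g N x ∂μ) atTop (𝓝 0) := by
    simpa using tendsto_integral_of_dominated_convergence (fun _ => 1)
      (fun N => (hgm N).aestronglyMeasurable) (integrable_const 1)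
      (fun N => Eventually.of_forall (hg1 N))
      (Eventually.of_forall fun x =>
        tendsto_measureReal_biUnion_Ici_zero_of_pairwise_disjoint hf hfd)
  have hstat : ∀ᵐ x ∂μ, ∀ N i, (κ x).real (⋃ k ≥ N, T^[i] ⁻¹' f k) = g N (S^[i] x) :=
    ae_all_iff.2 fun N => ae_all_iff.2 fun i => by
      filter_upwards [hκ.iterate hS.quasiMeasurePreserving hT i _ (htail N)] with x hx
      simp only [g, Measure.real, ← hx, Set.preimage_iUnion]
  filter_upwards [ae_forall_exists_birkhoffSum_le hS hgm
    (fun N => .of_bound (hgm N).aestronglyMeasurable 1 (Eventually.of_forall (hg1 N)))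
    (fun N x => measureReal_nonneg) hlim, hstat, ae_all_iff.2 h] with x hmax hx hmix
  simp only [Set.preimage_iUnion]
  refine CesaroNull.indepDefect_iUnion (fun i k => hT.iterate i (hf k))
    (fun i _ _ hjk => (hfd hjk).preimage _) (fun _ => hB) hmix fun ε hε => ?_
  obtain ⟨N, hN⟩ := hmax ε hε
  exact ⟨N, fun n => by simpa only [hx, birkhoffSum] using hN n⟩

theorem OutputWeaklyMixing.of_isPiSystem [IsFiniteMeasure μ] [IsMarkovKernel κ]
    (hS : MeasurePreserving S μ μ) (hT : Measurable T) (hκ : IsStationaryChannel κ μ S T)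
    {𝒞 : Set (Set Y)} (hgen : ‹MeasurableSpace Y› = MeasurableSpace.generateFrom 𝒞)
    (hpi : IsPiSystem 𝒞) (h : ∀ A ∈ 𝒞, ∀ B ∈ 𝒞, OutputWeaklyMixingOn κ μ T A B) :
    OutputWeaklyMixing κ μ T := by
  have hleft : ∀ B ∈ 𝒞, ∀ A, MeasurableSet A → OutputWeaklyMixingOn κ μ T A B := by
    intro B hB𝒞
    have hB : MeasurableSet B := hgen ▸ MeasurableSpace.measurableSet_generateFrom hB𝒞
    exact MeasurableSpace.induction_on_inter hgen hpi outputWeaklyMixingOn_empty_left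
      (fun A hA => h A hA B hB𝒞) (fun A hA => .compl_left hT hA)
      (fun f hfd hf => .iUnion_left hS hT hκ hB hf hfd)
  intro A B hA hB
  exact MeasurableSpace.induction_on_inter (C := fun B _ => OutputWeaklyMixingOn κ μ T A B)
    hgen hpi outputWeaklyMixingOn_empty_right (fun B hB => hleft B hB A hA)
    (fun B hB => .compl_right hB) (fun f hfd hf => .iUnion_right hT hA hf hfd) B hB

end Extension

section Product

variable {X Y Z : Type*} [MeasurableSpace X] [MeasurableSpace Y] [MeasurableSpace Z]
  {μ : Measure X} {S : X → X} {T₁ : Y → Y} {T₂ : Z → Z} {κ₁ : Kernel X Y} {κ₂ : Kernel X Z}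

theorem OutputWeaklyMixing.of_prod_left [IsSFiniteKernel κ₁] [IsMarkovKernel κ₂]
    (h : OutputWeaklyMixing (κ₁ ×ₖ κ₂) μ (Prod.map T₁ T₂)) : OutputWeaklyMixing κ₁ μ T₁ := by
  rw [outputWeaklyMixing_iff] at h ⊢
  intro A B hA hB
  filter_upwards [h _ _ (hA.prod .univ) (hB.prod .univ)] with x hx
  simpa only [Prod.map_iterate, Set.preimage_prod_map_prod, Set.preimage_univ, Kernel.prod_apply,
    indepDefect_prod_univ] using hx

theorem OutputWeaklyMixing.of_prod_right [IsMarkovKernel κ₁] [IsSFiniteKernel κ₂]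
    (h : OutputWeaklyMixing (κ₁ ×ₖ κ₂) μ (Prod.map T₁ T₂)) : OutputWeaklyMixing κ₂ μ T₂ := by
  rw [outputWeaklyMixing_iff] at h ⊢
  intro A B hA hB
  filter_upwards [h _ _ (MeasurableSet.univ.prod hA) (MeasurableSet.univ.prod hB)] with x hx
  simpa only [Prod.map_iterate, Set.preimage_prod_map_prod, Set.preimage_univ, Kernel.prod_apply,
    indepDefect_univ_prod] using hx

theorem OutputWeaklyMixing.prod [IsFiniteMeasure μ] [IsMarkovKernel κ₁] [IsMarkovKernel κ₂]
    (hS : MeasurePreserving S μ μ) (hT₁ : Measurable T₁) (hT₂ : Measurable T₂)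
    (hκ₁ : IsStationaryChannel κ₁ μ S T₁) (hκ₂ : IsStationaryChannel κ₂ μ S T₂)
    (h₁ : OutputWeaklyMixing κ₁ μ T₁) (h₂ : OutputWeaklyMixing κ₂ μ T₂) :
    OutputWeaklyMixing (κ₁ ×ₖ κ₂) μ (Prod.map T₁ T₂) := by
  refine .of_isPiSystem hS (hT₁.prodMap hT₂) (hκ₁.prod hT₁ hT₂ hκ₂) generateFrom_prod.symm
    isPiSystem_prod ?_
  rw [outputWeaklyMixing_iff] at h₁ h₂
  rintro _ ⟨A, hA, A', hA', rfl⟩ _ ⟨B, hB, B', hB', rfl⟩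
  filter_upwards [h₁ A B hA hB, h₂ A' B' hA' hB'] with x hx₁ hx₂
  refine (CesaroNull.add hx₁ hx₂).of_le (fun _ => indepDefect_nonneg) fun i => ?_
  rw [Prod.map_iterate, Set.preimage_prod_map_prod, Kernel.prod_apply]
  exact indepDefect_prod_le _ _

end Product

theorem measurable_seqShift {A : Type*} [MeasurableSpace A] : Measurable (seqShift (A := A)) :=
  measurable_pi_lambda _ fun i => measurable_pi_apply (i + 1)

/-- For channels stationary w.r.t. a stationary source, the channel product is output weakly
mixing iff both channels are output weakly mixing. -/
theorem channel_prod_owm_iff {A B C : Type*}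
    [MeasurableSpace A] [MeasurableSpace B] [MeasurableSpace C]
    (μ : Measure (ℕ → A)) [IsProbabilityMeasure μ] (hμ : μ.map seqShift = μ)
    (ν₁ : Kernel (ℕ → A) (ℕ → B)) (ν₂ : Kernel (ℕ → A) (ℕ → C))
    [IsMarkovKernel ν₁] [IsMarkovKernel ν₂]
    (hν₁ : ∀ G : Set (ℕ → B), MeasurableSet G →
      ∀ᵐ x ∂μ, ν₁ x (seqShift ⁻¹' G) = ν₁ (seqShift x) G)
    (hν₂ : ∀ H : Set (ℕ → C), MeasurableSet H →
      ∀ᵐ x ∂μ, ν₂ x (seqShift ⁻¹' H) = ν₂ (seqShift x) H) :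
    OutputWeaklyMixing (ν₁ ×ₖ ν₂) μ (Prod.map seqShift seqShift) ↔
      (OutputWeaklyMixing ν₁ μ seqShift ∧ OutputWeaklyMixing ν₂ μ seqShift) := by
  have hS : MeasurePreserving seqShift μ μ := ⟨measurable_seqShift, hμ⟩
  exact ⟨fun h => ⟨h.of_prod_left, h.of_prod_right⟩,
    fun ⟨h₁, h₂⟩ => h₁.prod hS measurable_seqShift measurable_seqShift hν₁ hν₂ h₂⟩
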